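/- The distribution function F : [0,1] → [0,1] defined by F(x) = μ([0,x]) (with F(1) := 1) is continuous and strictly increasing on [0,1]. -/

import Mathlib

open MeasureTheory Filter Topology Real
open scoped ENNReal

noncomputable section

/-- Stern's diatomic sequence: s(0)=0, s(1)=1, s(2n)=s(n), s(2n+1)=s(n)+s(n+1). -/
def stern : ℕ → ℕ
  | 0 => 0
  | 1 => 1
  | n + 2 =>
    if h : n % 2 = 0 then stern (n / 2 + 1)
    else stern (n / 2 + 1) + stern (n / 2 + 2)
decreasing_by all_goals omega
/-- The probability measure μ_n = 3^{-n} ∑_{m=0}^{2^n-1} s(2^n+m) δ_{m/2^n} on the 1-torus. -/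
def sternMeasure (n : ℕ) : Measure UnitAddCircle :=
  ((3 : ℝ≥0∞) ^ n)⁻¹ • ∑ m ∈ Finset.range (2 ^ n),
    (stern (2 ^ n + m) : ℝ≥0∞) • Measure.dirac ((m / 2 ^ n : ℝ) : UnitAddCircle)

/-!
For `n ≤ k` the `μ_k`-mass of the dyadic arc `[m/2^n, (m+1)/2^n)` is `3^{-k} T`, where `T` is the
sum of `s` over the `2^(k-n)` descendants `2^(k-n) A + j` of `A = 2^n + m` in the tree
`a ↦ 2a, 2a + 1`. The recursion of `s` gives `2 T + s(A+1) = 3^(k-n) (s(A) + s(A+1)) + s(A)`, and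
since `1 ≤ s(A) ≤ A < 2^(n+1)` every level-`n` dyadic arc has `μ_k`-mass between `3^{-n}/2` and
`4 (2/3)^n`, uniformly in `k ≥ n`. The portmanteau theorem transfers the lower bound to closed
arcs and the upper bound to open arcs of `μ`. Hence arcs of length `2^{-n}` have `μ`-mass
`O((2/3)^n)`, which makes `F` continuous, and every nondegenerate subinterval of `[0,1]` contains
a dyadic arc of positive mass, which makes `F` strictly increasing.
-/

def closedArc (a b : ℝ) : Set UnitAddCircle :=
  ((↑) : ℝ → UnitAddCircle) '' Set.Icc a b

theorem isClosed_closedArc (a b : ℝ) : IsClosed (closedArc a b) :=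
  (isCompact_Icc.image (AddCircle.continuous_mk' 1)).isClosed

theorem UnitAddCircle.coe_mem_image_coe_iff {x : ℝ} {I : Set ℝ} (hx : x ∈ Set.Ico 0 1)
    (hI : I ⊆ Set.Ico 0 1) :
    (x : UnitAddCircle) ∈ ((↑) : ℝ → UnitAddCircle) '' I ↔ x ∈ I := by
  refine ⟨fun ⟨y, hy, hxy⟩ => ?_, fun h => ⟨x, h, rfl⟩⟩
  have h01 : Set.Ico (0 : ℝ) 1 = Set.Ico 0 (0 + 1) := by rw [zero_add]
  rw [h01] at hx hI
  rwa [← (AddCircle.coe_eq_coe_iff_of_mem_Ico (hI hy) hx).1 hxy]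

theorem continuousOn_measureReal_closedArc {μ : Measure UnitAddCircle} [IsFiniteMeasure μ]
    (hsmall : ∀ ε > 0, ∃ δ > 0, ∀ u v : ℝ, v - u < δ →
      μ.real (closedArc u v) < ε) :
    ContinuousOn (fun x => μ.real (closedArc 0 x)) (Set.Ici 0) := by
  set G := fun x => μ.real (closedArc 0 x)
  have hsplit {u v : ℝ} (hu : 0 ≤ u) (huv : u ≤ v) :
      |G v - G u| ≤ μ.real (closedArc u v) := by
    have hmono : G u ≤ G v := measureReal_mono (Set.image_mono (Set.Icc_subset_Icc_right huv))
    have hunion : G v ≤ G u + μ.real (closedArc u v) := by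
      refine (measureReal_mono ?_).trans (measureReal_union_le _ _)
      simp only [closedArc, ← Set.image_union]
      exact Set.image_mono Set.Icc_subset_Icc_union_Icc
    rw [abs_of_nonneg (sub_nonneg.2 hmono)]
    linarith
  rw [Metric.continuousOn_iff]
  intro x hx ε hε
  obtain ⟨δ, hδ, hδε⟩ := hsmall ε hε
  refine ⟨δ, hδ, fun y hy hxy => ?_⟩
  rw [Real.dist_eq] at hxy ⊢
  rcases le_total x y with h | h
  · exact (hsplit hx h).trans_lt (hδε x y (by linarith [le_abs_self (y - x)]))
  · rw [abs_sub_comm]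
    exact (hsplit hy h).trans_lt (hδε y x (by linarith [neg_abs_le (y - x)]))

theorem strictMonoOn_measureReal_closedArc {μ : Measure UnitAddCircle} [IsFiniteMeasure μ]
    (hpos : ∀ a b : ℝ, 0 ≤ a → a < b → b ≤ 1 →
      0 < μ (closedArc a b)) :
    StrictMonoOn (fun x => μ.real (closedArc 0 x)) (Set.Icc 0 1) := by
  intro x hx y hy hxy
  obtain ⟨a, hxa, hay⟩ := exists_between hxy
  obtain ⟨b, hab, hby⟩ := exists_between hay
  have hdisj : Disjoint (closedArc 0 x)
      (closedArc a b) := by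
    rw [Set.disjoint_right]
    rintro _ ⟨w, hw, rfl⟩ hmem
    have hw01 : w ∈ Set.Ico (0 : ℝ) 1 :=
      ⟨by linarith [hw.1, hx.1], by linarith [hw.2, hy.2]⟩
    have hwx := (UnitAddCircle.coe_mem_image_coe_iff hw01
      (Set.Icc_subset_Ico_right (by linarith [hy.2]))).1 hmem
    linarith [hwx.2, hw.1]
  have hsub : closedArc 0 x ∪ closedArc a b ⊆ closedArc 0 y := by
    simp only [closedArc, ← Set.image_union]
    exact Set.image_mono (Set.union_subset (Set.Icc_subset_Icc_right hxy.le)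
      (Set.Icc_subset_Icc (by linarith [hx.1]) (by linarith)))
  have hpos_ab : 0 < μ.real (closedArc a b) :=
    ENNReal.toReal_pos (hpos a b (by linarith [hx.1]) (by linarith) (by linarith [hy.2])).ne'
      (by finiteness)
  calc μ.real (closedArc 0 x)
      < μ.real (closedArc 0 x)
        + μ.real (closedArc a b) := lt_add_of_pos_right _ hpos_ab
    _ = μ.real (closedArc 0 x ∪ closedArc a b) :=
        (measureReal_union hdisj (isClosed_closedArc a b).measurableSet).symm
    _ ≤ μ.real (closedArc 0 y) := measureReal_mono hsub

theorem stern_zero : stern 0 = 0 := by simp [stern]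

theorem stern_one : stern 1 = 1 := by simp [stern]

theorem stern_two_mul (n : ℕ) : stern (2 * n) = stern n := by
  rcases n with _ | n
  · rfl
  · rw [show 2 * (n + 1) = 2 * n + 2 by ring, stern, dif_pos (by omega)]
    congr 1
    omega

theorem stern_two_mul_add_one (n : ℕ) : stern (2 * n + 1) = stern n + stern (n + 1) := by
  rcases n with _ | n
  · simp [stern_zero, stern_one]
  · rw [show 2 * (n + 1) + 1 = (2 * n + 1) + 2 by ring, stern, dif_neg (by omega),
      show (2 * n + 1) / 2 = n by omega]

theorem stern_le_self (n : ℕ) : stern n ≤ n := by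
  induction n using Nat.strong_induction_on with
  | _ n ih =>
    obtain ⟨k, rfl | rfl⟩ := Nat.even_or_odd' n
    · rcases k.eq_zero_or_pos with rfl | hk
      · simp [stern_zero]
      · rw [stern_two_mul]
        linarith [ih k (by omega)]
    · rcases k.eq_zero_or_pos with rfl | hk
      · simp [stern_one]
      · rw [stern_two_mul_add_one]
        linarith [ih k (by omega), ih (k + 1) (by omega)]

theorem stern_pos {n : ℕ} (hn : 0 < n) : 0 < stern n := by
  induction n using Nat.strong_induction_on with
  | _ n ih =>
    obtain ⟨k, rfl | rfl⟩ := Nat.even_or_odd' n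
    · rw [stern_two_mul]
      exact ih k (by omega) (by omega)
    · rcases k.eq_zero_or_pos with rfl | hk
      · simp [stern_one]
      · rw [stern_two_mul_add_one]
        exact Nat.add_pos_right _ (ih (k + 1) (by omega) (by omega))

theorem stern_two_pow_mul (t n : ℕ) : stern (2 ^ t * n) = stern n := by
  induction t with
  | zero => simp
  | succ t ih => rw [pow_succ', mul_assoc, stern_two_mul, ih]

theorem Finset.sum_range_two_mul {M : Type*} [AddCommMonoid M] (f : ℕ → M) (n : ℕ) :
    ∑ j ∈ Finset.range (2 * n), f j
      = ∑ i ∈ Finset.range n, (f (2 * i) + f (2 * i + 1)) := by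
  induction n with
  | zero => simp
  | succ n ih =>
    rw [show 2 * (n + 1) = 2 * n + 1 + 1 by ring, Finset.sum_range_succ, Finset.sum_range_succ,
      ih, Finset.sum_range_succ, add_assoc]

def sternBlockSum (A t : ℕ) : ℕ :=
  ∑ j ∈ Finset.range (2 ^ t), stern (2 ^ t * A + j)

theorem sternBlockSum_succ (A t : ℕ) :
    sternBlockSum A (t + 1) + stern A = 3 * sternBlockSum A t + stern (A + 1) := by
  set B := 2 ^ t * A
  have hsplit : sternBlockSum A (t + 1)
      = ∑ i ∈ Finset.range (2 ^ t), (2 * stern (B + i) + stern (B + i + 1)) := by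
    rw [sternBlockSum, pow_succ', Finset.sum_range_two_mul]
    refine Finset.sum_congr rfl fun i _ => ?_
    rw [show 2 * 2 ^ t * A + 2 * i = 2 * (B + i) by ring,
      show 2 * 2 ^ t * A + (2 * i + 1) = 2 * (B + i) + 1 by ring,
      stern_two_mul, stern_two_mul_add_one]
    ring
  have hshift : ∑ i ∈ Finset.range (2 ^ t), stern (B + i + 1) + stern B
      = ∑ i ∈ Finset.range (2 ^ t), stern (B + i) + stern (B + 2 ^ t) := by
    rw [← Finset.sum_range_succ, Finset.sum_range_succ']
    rfl
  have hB : stern B = stern A := stern_two_pow_mul t A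
  have hB' : stern (B + 2 ^ t) = stern (A + 1) := by
    rw [show B + 2 ^ t = 2 ^ t * (A + 1) by ring, stern_two_pow_mul]
  have hT : sternBlockSum A t = ∑ i ∈ Finset.range (2 ^ t), stern (B + i) := rfl
  rw [hsplit, Finset.sum_add_distrib, ← Finset.mul_sum, hT]
  omega

theorem two_mul_sternBlockSum_add (A t : ℕ) :
    2 * sternBlockSum A t + stern (A + 1) = 3 ^ t * (stern A + stern (A + 1)) + stern A := by
  induction t with
  | zero =>
    simp only [sternBlockSum, pow_zero, Finset.range_one, one_mul, Finset.sum_singleton, add_zero]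
    ring
  | succ t ih =>
    rw [pow_succ]
    nlinarith [sternBlockSum_succ A t]

theorem three_pow_le_two_mul_sternBlockSum {A : ℕ} (hA : 0 < A) (t : ℕ) :
    3 ^ t ≤ 2 * sternBlockSum A t := by
  nlinarith [two_mul_sternBlockSum_add A t, stern_pos hA, Nat.one_le_pow t 3 (by norm_num)]

theorem sternBlockSum_le (A t : ℕ) : sternBlockSum A t ≤ 3 ^ t * (2 * A + 1) := by
  nlinarith [two_mul_sternBlockSum_add A t, stern_le_self A, stern_le_self (A + 1),
    Nat.one_le_pow t 3 (by norm_num)]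

theorem sternBlockSum_one (t : ℕ) : sternBlockSum 1 t = 3 ^ t := by
  have h := two_mul_sternBlockSum_add 1 t
  rw [show 1 + 1 = 2 * 1 by rfl, stern_two_mul, stern_one] at h
  omega

open Classical in
theorem sternMeasure_apply (k : ℕ) (S : Set UnitAddCircle) :
    sternMeasure k S = (∑ j ∈ (Finset.range (2 ^ k)).filter
      (fun j : ℕ => ((j / 2 ^ k : ℝ) : UnitAddCircle) ∈ S), stern (2 ^ k + j) : ℕ)
      / 3 ^ k := by
  simp [sternMeasure, Finset.sum_filter, Set.indicator_apply, ENNReal.div_eq_inv_mul]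

def dyadicArc (n : ℕ) (m : ℤ) : Set UnitAddCircle :=
  ((↑) : ℝ → UnitAddCircle) '' Set.Ico (m / 2 ^ n) ((m + 1) / 2 ^ n)

theorem dyadicArc_add_two_pow_mul (n : ℕ) (m q : ℤ) :
    dyadicArc n (m + 2 ^ n * q) = dyadicArc n m := by
  have hshift :
      Set.Ico (((m + 2 ^ n * q : ℤ) : ℝ) / 2 ^ n) (((m + 2 ^ n * q : ℤ) + 1) / 2 ^ n)
      = (· + (q : ℝ)) '' Set.Ico ((m : ℝ) / 2 ^ n) ((m + 1) / 2 ^ n) := by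
    rw [Set.image_add_const_Ico]
    push_cast
    congr 1 <;> field_simp
    ring
  rw [dyadicArc, dyadicArc, hshift, Set.image_image]
  congr 1
  funext x
  rw [AddCircle.coe_add, (AddCircle.coe_eq_zero_iff (1 : ℝ) (x := q)).2 ⟨q, by simp⟩,
    add_zero]

theorem dyadicArc_emod (n : ℕ) (m : ℤ) : dyadicArc n (m % 2 ^ n) = dyadicArc n m := by
  conv_rhs => rw [← Int.emod_add_mul_ediv m (2 ^ n)]
  exact (dyadicArc_add_two_pow_mul n _ _).symm

theorem sternMeasure_dyadicArc {n m : ℕ} (hm : m < 2 ^ n) (t : ℕ) :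
    sternMeasure (n + t) (dyadicArc n m) = sternBlockSum (2 ^ n + m) t / 3 ^ (n + t) := by
  classical
  have hreal (j : ℕ) :
      (j : ℝ) / 2 ^ (n + t) ∈ Set.Ico (((m : ℤ) : ℝ) / 2 ^ n) (((m : ℤ) + 1) / 2 ^ n)
      ↔ m * 2 ^ t ≤ j ∧ j < (m + 1) * 2 ^ t := by
    rw [pow_add, mul_comm, ← div_div, Set.mem_Ico, div_le_div_iff_of_pos_right (by positivity),
      div_lt_div_iff_of_pos_right (by positivity), le_div_iff₀ (by positivity),
      div_lt_iff₀ (by positivity)]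
    norm_cast
  have hunit : Set.Ico (((m : ℤ) : ℝ) / 2 ^ n) (((m : ℤ) + 1) / 2 ^ n) ⊆ Set.Ico 0 1 := by
    refine Set.Ico_subset_Ico (by positivity) ((div_le_one (by positivity)).2 ?_)
    exact_mod_cast hm
  have hunit_of_lt {j : ℕ} (hj : j < 2 ^ (n + t)) : (j : ℝ) / 2 ^ (n + t) ∈ Set.Ico 0 1 :=
    ⟨by positivity, (div_lt_one (by positivity)).2 (by exact_mod_cast hj)⟩
  have hfilter : (Finset.range (2 ^ (n + t))).filter
      (fun j : ℕ => ((j / 2 ^ (n + t) : ℝ) : UnitAddCircle) ∈ dyadicArc n m)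
      = Finset.Ico (m * 2 ^ t) ((m + 1) * 2 ^ t) := by
    ext j
    rw [Finset.mem_filter, Finset.mem_range, Finset.mem_Ico, ← hreal]
    constructor
    · rintro ⟨hj, hmem⟩
      exact (UnitAddCircle.coe_mem_image_coe_iff (hunit_of_lt hj) hunit).1 hmem
    · intro hmem
      have hj : j < 2 ^ (n + t) := by
        have := (hreal j).1 hmem
        rw [pow_add]
        nlinarith
      exact ⟨hj, (UnitAddCircle.coe_mem_image_coe_iff (hunit_of_lt hj) hunit).2 hmem⟩
  rw [sternMeasure_apply, hfilter, Finset.sum_Ico_eq_sum_range,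
    show (m + 1) * 2 ^ t - m * 2 ^ t = 2 ^ t by rw [add_one_mul, Nat.add_sub_cancel_left]]
  congr 2
  refine Finset.sum_congr rfl fun j _ => ?_
  rw [pow_add]
  ring_nf

theorem sternMeasure_univ (k : ℕ) : sternMeasure k Set.univ = 1 := by
  have huniv : Set.univ = dyadicArc 0 ((0 : ℕ) : ℤ) := by
    simp [dyadicArc, ← AddCircle.coe_image_Ico_eq (1 : ℝ) 0]
  have := sternMeasure_dyadicArc (n := 0) (m := 0) (by norm_num) k
  rw [zero_add] at this
  rw [huniv, this, pow_zero, add_zero, sternBlockSum_one, Nat.cast_pow, Nat.cast_ofNat]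
  exact ENNReal.div_self (pow_ne_zero _ (by norm_num)) (ENNReal.pow_ne_top (by norm_num))

instance (k : ℕ) : IsProbabilityMeasure (sternMeasure k) := ⟨sternMeasure_univ k⟩

theorem sternMeasure_dyadicArc_le {n k : ℕ} (hnk : n ≤ k) (m : ℤ) :
    sternMeasure k (dyadicArc n m) ≤ 4 * 2 ^ n / 3 ^ n := by
  obtain ⟨t, rfl⟩ := Nat.exists_eq_add_of_le hnk
  have hr : ((m % 2 ^ n).toNat : ℤ) = m % 2 ^ n :=
    Int.toNat_of_nonneg (Int.emod_nonneg _ (by positivity))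
  have hrlt : (m % 2 ^ n).toNat < 2 ^ n := by
    have := Int.emod_lt_of_pos m (show (0 : ℤ) < 2 ^ n by positivity)
    zify
    omega
  rw [← dyadicArc_emod, ← hr, sternMeasure_dyadicArc hrlt]
  have hB : sternBlockSum (2 ^ n + (m % 2 ^ n).toNat) t ≤ 3 ^ t * (4 * 2 ^ n) :=
    (sternBlockSum_le _ t).trans (Nat.mul_le_mul_left _ (by omega))
  calc (sternBlockSum (2 ^ n + (m % 2 ^ n).toNat) t : ℝ≥0∞) / 3 ^ (n + t)
      ≤ ((3 ^ t * (4 * 2 ^ n) : ℕ) : ℝ≥0∞) / 3 ^ (n + t) :=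
        ENNReal.div_le_div_right (by exact_mod_cast hB) _
    _ = 4 * 2 ^ n / 3 ^ n := by
      push_cast
      rw [pow_add, mul_comm ((3 : ℝ≥0∞) ^ n),
        ENNReal.mul_div_mul_left _ _ (by simp) (by simp)]

theorem inv_two_mul_three_pow_le_sternMeasure_dyadicArc {n m k : ℕ} (hm : m < 2 ^ n)
    (hnk : n ≤ k) : (2 * 3 ^ n)⁻¹ ≤ sternMeasure k (dyadicArc n m) := by
  obtain ⟨t, rfl⟩ := Nat.exists_eq_add_of_le hnk
  rw [sternMeasure_dyadicArc hm]
  have hB := three_pow_le_two_mul_sternBlockSum (A := 2 ^ n + m) (by positivity) t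
  calc (2 * 3 ^ n : ℝ≥0∞)⁻¹ = 1 * 3 ^ t / (2 * 3 ^ n * 3 ^ t) := by
        rw [ENNReal.mul_div_mul_right _ _ (by simp) (by simp), one_div]
    _ ≤ (2 * sternBlockSum (2 ^ n + m) t : ℕ) / (2 * 3 ^ (n + t)) := by
        rw [one_mul, pow_add, mul_assoc]
        exact ENNReal.div_le_div_right (by exact_mod_cast hB) _
    _ = sternBlockSum (2 ^ n + m) t / 3 ^ (n + t) := by
        push_cast
        exact ENNReal.mul_div_mul_left _ _ (by simp) (by simp)

def sternProbabilityMeasure (k : ℕ) : ProbabilityMeasure UnitAddCircle :=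
  ⟨sternMeasure k, inferInstance⟩

namespace SternLimit

variable {ν : ProbabilityMeasure UnitAddCircle}

theorem inv_two_mul_three_pow_le_measure_closedArc
    (hν : Tendsto sternProbabilityMeasure atTop (𝓝 ν)) {n m : ℕ} (hm : m < 2 ^ n) :
    (2 * 3 ^ n)⁻¹ ≤ (ν : Measure UnitAddCircle)
      (closedArc ((m : ℝ) / 2 ^ n) ((m + 1) / 2 ^ n)) := by
  refine le_trans ?_
    (ProbabilityMeasure.limsup_measure_closed_le_of_tendsto hν (isClosed_closedArc _ _))
  refine le_limsup_of_frequently_le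
    (Eventually.frequently (eventually_atTop.2 ⟨n, fun k hk => ?_⟩))
  refine (inv_two_mul_three_pow_le_sternMeasure_dyadicArc hm hk).trans (measure_mono ?_)
  rw [dyadicArc, closedArc, Int.cast_natCast]
  exact Set.image_mono Set.Ico_subset_Icc_self

theorem measure_closedArc_pos
    (hν : Tendsto sternProbabilityMeasure atTop (𝓝 ν)) {a b : ℝ} (ha : 0 ≤ a) (hab : a < b)
    (hb : b ≤ 1) : 0 < (ν : Measure UnitAddCircle) (closedArc a b) := by
  obtain ⟨n, hn⟩ := pow_unbounded_of_one_lt (2 / (b - a)) one_lt_two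
  have h2n : (0 : ℝ) < 2 ^ n := by positivity
  have hstep : 2 / 2 ^ n < b - a := by
    rw [div_lt_iff₀ h2n]
    rw [div_lt_iff₀ (sub_pos.2 hab)] at hn
    linarith
  set m := ⌈2 ^ n * a⌉₊
  have hma : a ≤ m / 2 ^ n := by
    rw [le_div_iff₀ h2n, mul_comm]
    exact Nat.le_ceil _
  have hmb : (m + 1) / 2 ^ n < b := by
    have := Nat.ceil_lt_add_one (mul_nonneg h2n.le ha)
    rw [div_lt_iff₀ h2n]
    rw [div_lt_iff₀ h2n] at hstep
    nlinarith
  have hm : m < 2 ^ n := by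
    have := hmb.trans_le hb
    rw [div_lt_one h2n] at this
    exact_mod_cast (lt_add_one (m : ℝ)).trans this
  refine (ENNReal.inv_pos.2 (by finiteness)).trans_le
    ((inv_two_mul_three_pow_le_measure_closedArc hν hm).trans (measure_mono ?_))
  exact Set.image_mono (Set.Icc_subset_Icc hma hmb.le)

theorem measure_closedArc_le
    (hν : Tendsto sternProbabilityMeasure atTop (𝓝 ν)) (n : ℕ) {u v : ℝ}
    (huv : v - u ≤ (2 ^ n)⁻¹) :
    (ν : Measure UnitAddCircle) (closedArc u v) ≤ 3 * (4 * 2 ^ n / 3 ^ n) := by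
  have h2n : (0 : ℝ) < 2 ^ n := by positivity
  set m := ⌊u * 2 ^ n⌋
  -- portmanteau bounds `ν` from above only on open sets
  set G := ((↑) : ℝ → UnitAddCircle) '' Set.Ioo ((m - 1) / 2 ^ n) ((m + 1 + 1) / 2 ^ n)
  have hsub : closedArc u v ⊆ G := by
    refine Set.image_mono (Set.Icc_subset_Ioo ?_ ?_)
    · rw [div_lt_iff₀ h2n]
      linarith [Int.floor_le (u * 2 ^ n)]
    · rw [lt_div_iff₀ h2n]
      have := Int.lt_floor_add_one (u * 2 ^ n)
      have := mul_le_mul_of_nonneg_right huv h2n.le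
      rw [sub_mul, inv_mul_cancel₀ h2n.ne'] at this
      linarith
  have hcover : G ⊆ dyadicArc n (m - 1) ∪ dyadicArc n m ∪ dyadicArc n (m + 1) := by
    simp only [G, dyadicArc, ← Set.image_union]
    refine Set.image_mono (Set.Ioo_subset_Ico_self.trans (le_of_eq ?_))
    push_cast
    rw [sub_add_cancel, Set.Ico_union_Ico_eq_Ico (by gcongr; linarith) (by gcongr; linarith),
      Set.Ico_union_Ico_eq_Ico (by gcongr; linarith) (by gcongr; linarith)]
  have hopen : IsOpen G := QuotientAddGroup.isOpenMap_coe _ isOpen_Ioo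
  calc (ν : Measure UnitAddCircle) (closedArc u v)
      ≤ (ν : Measure UnitAddCircle) G := measure_mono hsub
    _ ≤ atTop.liminf fun k => sternMeasure k G :=
        ProbabilityMeasure.le_liminf_measure_open_of_tendsto hν hopen
    _ ≤ 3 * (4 * 2 ^ n / 3 ^ n) := by
        refine liminf_le_of_frequently_le
          (Eventually.frequently (eventually_atTop.2 ⟨n, fun k hk => ?_⟩))
        calc sternMeasure k G
            ≤ sternMeasure k (dyadicArc n (m - 1)) + sternMeasure k (dyadicArc n m)
              + sternMeasure k (dyadicArc n (m + 1)) :=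
              (measure_mono hcover).trans
                ((measure_union_le _ _).trans (by gcongr; exact measure_union_le _ _))
          _ ≤ 4 * 2 ^ n / 3 ^ n + 4 * 2 ^ n / 3 ^ n + 4 * 2 ^ n / 3 ^ n := by
              gcongr <;> exact sternMeasure_dyadicArc_le hk _
          _ = 3 * (4 * 2 ^ n / 3 ^ n) := by ring

theorem exists_measureReal_closedArc_lt
    (hν : Tendsto sternProbabilityMeasure atTop (𝓝 ν)) {ε : ℝ} (hε : 0 < ε) :
    ∃ δ > 0, ∀ u v : ℝ, v - u < δ →
      (ν : Measure UnitAddCircle).real (closedArc u v) < ε := by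
  obtain ⟨n, hn⟩ := exists_pow_lt_of_lt_one (div_pos hε (by norm_num : (0 : ℝ) < 12))
    (by norm_num : (2 / 3 : ℝ) < 1)
  refine ⟨(2 ^ n)⁻¹, by positivity, fun u v huv => ?_⟩
  calc (ν : Measure UnitAddCircle).real (closedArc u v)
      ≤ (3 * (4 * 2 ^ n / 3 ^ n) : ℝ≥0∞).toReal :=
        ENNReal.toReal_mono (by finiteness) (measure_closedArc_le hν n huv.le)
    _ = 12 * (2 / 3) ^ n := by
        simp only [ENNReal.toReal_mul, ENNReal.toReal_ofNat, ENNReal.toReal_div, ENNReal.toReal_pow,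
          div_pow]
        ring
    _ < ε := by linarith

end SternLimit

/-- The distribution function F(x) = μ([0,x]) of the weak limit μ is continuous and strictly
increasing on [0,1]. -/
theorem sternLimit_distribution_strictMono (μ : Measure UnitAddCircle)
    (hμ : IsProbabilityMeasure μ)
    (hlim : ∀ f : C(UnitAddCircle, ℝ),
      Tendsto (fun n => ∫ x, f x ∂(sternMeasure n)) atTop (𝓝 (∫ x, f x ∂μ)))
    (F : ℝ → ℝ)
    (hF : ∀ x : ℝ, F x =
      (μ ((fun y : ℝ => (y : UnitAddCircle)) '' Set.Icc (0 : ℝ) x)).toReal) :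
    ContinuousOn F (Set.Icc (0 : ℝ) 1) ∧ StrictMonoOn F (Set.Icc (0 : ℝ) 1) := by
  have := hμ
  have hν : Tendsto sternProbabilityMeasure atTop (𝓝 ⟨μ, hμ⟩) :=
    ProbabilityMeasure.tendsto_iff_forall_integral_tendsto.2 fun f => hlim f.toContinuousMap
  obtain rfl : F = fun x => μ.real (closedArc 0 x) := funext hF
  refine ⟨(continuousOn_measureReal_closedArc fun ε hε => ?_).mono Set.Icc_subset_Ici_self,
    strictMonoOn_measureReal_closedArc fun a b ha hab hb => ?_⟩
  · exact SternLimit.exists_measureReal_closedArc_lt hν hε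
  · exact SternLimit.measure_closedArc_pos hν ha hab hb
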